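/- arXiv:1704.05991 — 2 statements merged into one kernel-verified Lean document; each statement's English description precedes it below -/
import Mathlib

section
/- For the symmetric matrix A_n indexed by the vertex set V_n = {(i,u) ∈ ℤ² : 0 ≤ i < n, |u| ≤ i, i - u even}, with entries A_n[(i,u),(j,v)] = 1/|i-j| if i ≠ j and |u - v| ≤ |i - j|, and 0 otherwise, there exist constants c, C > 0 such that c n² log n ≤ ‖A_n‖_F² ≤ C n² log n for all n ≥ 2, where ‖·‖_F is the Frobenius norm. -/
/-- The vertex set `V_n = {(i,u) ∈ ℤ² : 0 ≤ i < n, |u| ≤ i, i - u even}`. -/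
noncomputable def triVertices (n : ℕ) : Finset (ℤ × ℤ) :=
  (Finset.Icc (-(n : ℤ)) n ×ˢ Finset.Icc (-(n : ℤ)) n).filter
    (fun p => 0 ≤ p.1 ∧ p.1 < n ∧ |p.2| ≤ p.1 ∧ (p.1 - p.2) % 2 = 0)

/-- The matrix entry: `A[(i,u),(j,v)] = 1/|i-j|` if `i ≠ j` and `|u-v| ≤ |i-j|`,
and `0` otherwise. -/
noncomputable def triEntry (p q : ℤ × ℤ) : ℝ :=
  if p.1 ≠ q.1 ∧ |p.2 - q.2| ≤ |p.1 - q.1| then |(p.1 : ℝ) - (q.1 : ℝ)|⁻¹ else 0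

/-!
In light-cone coordinates `a = (i + u) / 2`, `b = (i - u) / 2` the vertex set is the triangle
`a, b ≥ 0, a + b < n`, and `p ⇝ q` says that `q - p` is a nonzero vector whose two coordinates
have the same sign; the entry is then the inverse of their total `|Δa + Δb| = |i - j|`.

Upper bound: in a fixed row, the vertices related to `p` at horizontal distance `d` lie on two
vertical segments of `2d + 1` points, so they contribute at most `6 / d`. Summing over `d` bounds
each row by `6 H_n`, and there are at most `2 n²` rows.

Lower bound: with `m = ⌊(n + 2) / 4⌋`, each of the `m²` vertices with `a, b < m` sees, for every
`1 ≤ s ≤ m`, the `s` vertices at light-cone offset `(s, t)`, `t < s`, each with entry at least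
`1 / (2s)`. So each such row carries at least `H_m / 4`, and `log n ≤ 3 H_m`.
-/

open Finset

lemma Finset.sum_comp_le_sum_of_injOn {ι κ M : Type*} [AddCommMonoid M] [PartialOrder M]
    [IsOrderedAddMonoid M] {s : Finset ι} {t : Finset κ} {e : ι → κ} (he : Set.InjOn e s)
    (hst : ∀ i ∈ s, e i ∈ t) {f : κ → M} (hf : ∀ k ∈ t, 0 ≤ f k) :
    ∑ i ∈ s, f (e i) ≤ ∑ k ∈ t, f k := by
  classical
  rw [← sum_image he]
  exact sum_le_sum_of_subset_of_nonneg (image_subset_iff.2 hst) fun k hk _ => hf k hk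

lemma mem_triVertices {n : ℕ} {p : ℤ × ℤ} :
    p ∈ triVertices n ↔ 0 ≤ p.1 ∧ p.1 < n ∧ |p.2| ≤ p.1 ∧ (p.1 - p.2) % 2 = 0 := by
  simp only [triVertices, mem_filter, mem_product, mem_Icc, and_iff_right_iff_imp, abs_le]
  omega

lemma card_triVertices_le (n : ℕ) : #(triVertices n) ≤ 2 * n ^ 2 := by
  have hsub : triVertices n ⊆ Ico 0 (n : ℤ) ×ˢ Ico (-(n : ℤ)) n := by
    intro p hp
    rw [mem_triVertices, abs_le] at hp
    simp only [mem_product, mem_Ico]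
    omega
  refine (card_le_card hsub).trans_eq ?_
  rw [card_product, Int.card_Ico, Int.card_Ico, sub_zero, sub_neg_eq_add, ← Nat.cast_add,
    Int.toNat_natCast, Int.toNat_natCast]
  ring

lemma triEntry_sq (p q : ℤ × ℤ) :
    triEntry p q ^ 2 =
      if p.1 ≠ q.1 ∧ |p.2 - q.2| ≤ |p.1 - q.1| then (((p.1 - q.1).natAbs : ℝ) ^ 2)⁻¹ else 0 := by
  unfold triEntry
  split_ifs <;> simp [inv_pow, Nat.cast_natAbs, Int.cast_sub, sq_abs]

lemma card_le_of_forall_natAbs_sub_eq {p : ℤ × ℤ} {d : ℕ} {s : Finset (ℤ × ℤ)}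
    (hs : ∀ q ∈ s, |p.2 - q.2| ≤ |p.1 - q.1| ∧ (p.1 - q.1).natAbs = d) :
    #s ≤ 2 * (2 * d + 1) := by
  have hsub : s ⊆ {p.1 - d, p.1 + d} ×ˢ Icc (p.2 - d) (p.2 + d) := by
    intro q hq
    obtain ⟨hrel, hd⟩ := hs q hq
    rw [Int.abs_eq_natAbs (p.1 - q.1), hd, abs_le] at hrel
    simp only [mem_product, mem_insert, mem_singleton, mem_Icc]
    omega
  refine (card_le_card hsub).trans ?_
  rw [card_product, Int.card_Icc]
  gcongr
  · exact card_le_two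
  · omega

lemma sum_triEntry_sq_le_six_mul_harmonic {n : ℕ} {p : ℤ × ℤ} (hp : p ∈ triVertices n) :
    ∑ q ∈ triVertices n, triEntry p q ^ 2 ≤ 6 * harmonic n := by
  set R := {q ∈ triVertices n | p.1 ≠ q.1 ∧ |p.2 - q.2| ≤ |p.1 - q.1|}
  have hmaps : ∀ q ∈ R, (p.1 - q.1).natAbs ∈ Icc 1 n := by
    intro q hq
    simp only [R, mem_filter, mem_triVertices] at hq
    rw [mem_triVertices] at hp
    rw [mem_Icc]
    omega
  calc ∑ q ∈ triVertices n, triEntry p q ^ 2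
      = ∑ q ∈ R, (((p.1 - q.1).natAbs : ℝ) ^ 2)⁻¹ := by
        rw [sum_filter]
        exact sum_congr rfl fun q _ => triEntry_sq p q
    _ = ∑ d ∈ Icc 1 n, ∑ q ∈ R with (p.1 - q.1).natAbs = d, (((p.1 - q.1).natAbs : ℝ) ^ 2)⁻¹ :=
        (sum_fiberwise_of_maps_to hmaps _).symm
    _ ≤ ∑ d ∈ Icc 1 n, (2 * (2 * d + 1) : ℕ) * ((d : ℝ) ^ 2)⁻¹ := by
        refine sum_le_sum fun d _ => ?_
        rw [sum_congr rfl fun q hq => by rw [(mem_filter.1 hq).2], sum_const, nsmul_eq_mul]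
        gcongr
        refine card_le_of_forall_natAbs_sub_eq (p := p) fun q hq => ?_
        simp only [R, mem_filter] at hq
        exact ⟨hq.1.2.2, hq.2⟩
    _ ≤ ∑ d ∈ Icc 1 n, 6 * (d : ℝ)⁻¹ := by
        refine sum_le_sum fun d hd => ?_
        have hd : (1 : ℝ) ≤ d := by exact_mod_cast (mem_Icc.1 hd).1
        rw [← div_eq_mul_inv, ← div_eq_mul_inv, div_le_div_iff₀ (by positivity) (by positivity)]
        push_cast
        nlinarith
    _ = 6 * harmonic n := by
        rw [← mul_sum, harmonic_eq_sum_Icc]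
        push_cast
        rfl

lemma sum_sum_triEntry_sq_le {n : ℕ} (hn : 2 ≤ n) :
    ∑ p ∈ triVertices n, ∑ q ∈ triVertices n, triEntry p q ^ 2 ≤
      36 * (n : ℝ) ^ 2 * Real.log n := by
  have hlog : 1 ≤ 2 * Real.log n := by
    have := Real.log_le_log (by norm_num) (show (2 : ℝ) ≤ n by exact_mod_cast hn)
    linarith [Real.log_two_gt_d9]
  calc ∑ p ∈ triVertices n, ∑ q ∈ triVertices n, triEntry p q ^ 2
      ≤ #(triVertices n) • (6 * (harmonic n : ℝ)) :=
        sum_le_card_nsmul _ _ _ fun p hp => sum_triEntry_sq_le_six_mul_harmonic hp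
    _ ≤ (2 * (n : ℝ) ^ 2) * (6 * (1 + Real.log n)) := by
        rw [nsmul_eq_mul]
        gcongr
        · exact mul_nonneg (by norm_num) (by exact_mod_cast (harmonic_pos (by omega)).le)
        · exact_mod_cast card_triVertices_le n
        · exact harmonic_le_one_add_log n
    _ ≤ 36 * (n : ℝ) ^ 2 * Real.log n := by nlinarith [sq_nonneg (n : ℝ)]

/-- The vertex at light-cone offset `(s, t)` from `p`. -/
def coneShift (p : ℤ × ℤ) (s t : ℕ) : ℤ × ℤ := (p.1 + (s + t), p.2 + (s - t))

lemma coneShift_inj {p : ℤ × ℤ} {s t s' t' : ℕ} :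
    coneShift p s t = coneShift p s' t' ↔ s = s' ∧ t = t' := by
  simp only [coneShift, Prod.mk.injEq]
  omega

lemma coneShift_mem_triVertices {n : ℕ} {p : ℤ × ℤ} {s t : ℕ} (hp : p ∈ triVertices n)
    (h : p.1 + s + t < n) : coneShift p s t ∈ triVertices n := by
  rw [mem_triVertices, abs_le] at hp ⊢
  simp only [coneShift]
  omega

lemma triEntry_coneShift (p : ℤ × ℤ) {s t : ℕ} (h : 0 < s + t) :
    triEntry p (coneShift p s t) = ((s + t : ℕ) : ℝ)⁻¹ := by
  have hrel : p.1 ≠ (coneShift p s t).1 ∧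
      |p.2 - (coneShift p s t).2| ≤ |p.1 - (coneShift p s t).1| := by
    simp only [coneShift, sub_add_cancel_left, abs_neg]
    rw [abs_of_nonneg (a := (s : ℤ) + t) (by positivity), abs_le]
    omega
  rw [triEntry, if_pos hrel]
  simp only [coneShift]
  push_cast
  rw [sub_add_cancel_left, abs_neg, abs_of_nonneg (by positivity)]

lemma harmonic_div_four_le_sum_triEntry_sq {n m : ℕ} {p : ℤ × ℤ} (hp : p ∈ triVertices n)
    (hm : p.1 + 2 * m ≤ n) :
    (harmonic m : ℝ) / 4 ≤ ∑ q ∈ triVertices n, triEntry p q ^ 2 := by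
  calc (harmonic m : ℝ) / 4 = ∑ s ∈ Icc 1 m, #(range s) • ((2 * s : ℝ) ^ 2)⁻¹ := by
        rw [harmonic_eq_sum_Icc, Rat.cast_sum, sum_div]
        refine sum_congr rfl fun s hs => ?_
        have : (s : ℝ) ≠ 0 := by have := (mem_Icc.1 hs).1; positivity
        rw [card_range, nsmul_eq_mul]
        push_cast
        field_simp
        ring
    _ ≤ ∑ s ∈ Icc 1 m, ∑ t ∈ range s, triEntry p (coneShift p s t) ^ 2 := by
        refine sum_le_sum fun s hs => card_nsmul_le_sum _ _ _ fun t ht => ?_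
        have hs := (mem_Icc.1 hs).1
        have ht := mem_range.1 ht
        rw [triEntry_coneShift p (by omega), inv_pow]
        gcongr
        exact_mod_cast (show s + t ≤ 2 * s by omega)
    _ = ∑ x ∈ (Icc 1 m).sigma range, triEntry p (coneShift p x.1 x.2) ^ 2 := sum_sigma' _ _ _
    _ ≤ ∑ q ∈ triVertices n, triEntry p q ^ 2 := by
        refine sum_comp_le_sum_of_injOn ?_ ?_ fun q _ => sq_nonneg _
        · intro x _ y _ hxy
          obtain ⟨hs, ht⟩ := coneShift_inj.1 hxy
          exact Sigma.ext hs (heq_of_eq ht)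
        · intro x hx
          simp only [mem_sigma, mem_Icc, mem_range] at hx
          exact coneShift_mem_triVertices hp (by omega)

lemma sq_mul_harmonic_div_four_le_sum_sum_triEntry_sq {n m : ℕ} (hm : 4 * m ≤ n + 2) :
    (m : ℝ) ^ 2 * harmonic m / 4 ≤
      ∑ p ∈ triVertices n, ∑ q ∈ triVertices n, triEntry p q ^ 2 := by
  have hbase : ∀ x ∈ range m ×ˢ range m, coneShift (0, 0) x.1 x.2 ∈ triVertices n := by
    intro x hx
    simp only [mem_product, mem_range] at hx
    rw [mem_triVertices, abs_le]
    simp only [coneShift]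
    omega
  calc (m : ℝ) ^ 2 * harmonic m / 4 = #(range m ×ˢ range m) • ((harmonic m : ℝ) / 4) := by
        rw [card_product, card_range, nsmul_eq_mul]
        push_cast
        ring
    _ ≤ ∑ x ∈ range m ×ˢ range m,
          ∑ q ∈ triVertices n, triEntry (coneShift (0, 0) x.1 x.2) q ^ 2 := by
        refine card_nsmul_le_sum _ _ _ fun x hx => ?_
        refine harmonic_div_four_le_sum_triEntry_sq (hbase x hx) ?_
        simp only [mem_product, mem_range] at hx
        simp only [coneShift]
        omega
    _ ≤ ∑ p ∈ triVertices n, ∑ q ∈ triVertices n, triEntry p q ^ 2 := by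
        refine sum_comp_le_sum_of_injOn (f := fun p => ∑ q ∈ triVertices n, triEntry p q ^ 2)
          ?_ hbase fun p _ => sum_nonneg fun q _ => sq_nonneg _
        intro x _ y _ hxy
        obtain ⟨hs, ht⟩ := coneShift_inj.1 hxy
        exact Prod.ext hs ht

lemma log_le_three_mul_harmonic {n m : ℕ} (h : n ≤ (m + 1) ^ 3) :
    Real.log n ≤ 3 * harmonic m := by
  have hm := log_add_one_le_harmonic m
  have hm₀ : 0 ≤ Real.log ↑(m + 1) := Real.log_nonneg (by simp)
  rcases n.eq_zero_or_pos with rfl | hn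
  · simp only [Nat.cast_zero, Real.log_zero]
    linarith
  calc Real.log n ≤ Real.log (((m + 1) ^ 3 : ℕ) : ℝ) :=
        Real.log_le_log (by positivity) (by exact_mod_cast h)
    _ = 3 * Real.log ↑(m + 1) := by rw [Nat.cast_pow, Real.log_pow]; norm_num
    _ ≤ 3 * harmonic m := by linarith

/-- There exist `c, C > 0` such that for all `n ≥ 2`,
`c n² log n ≤ ‖A_n‖_F² ≤ C n² log n`, where
`‖A_n‖_F² = ∑_{p,q ∈ V_n} A_n[p,q]²`. -/
theorem frobenius_norm_sq_asymp :
    ∃ c C : ℝ, 0 < c ∧ 0 < C ∧ ∀ n : ℕ, 2 ≤ n →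
      c * (n : ℝ) ^ 2 * Real.log n ≤
        (∑ p ∈ triVertices n, ∑ q ∈ triVertices n, (triEntry p q) ^ 2) ∧
      (∑ p ∈ triVertices n, ∑ q ∈ triVertices n, (triEntry p q) ^ 2) ≤
        C * (n : ℝ) ^ 2 * Real.log n := by
  refine ⟨1 / 300, 36, by norm_num, by norm_num, fun n hn => ⟨?_, sum_sum_triEntry_sq_le hn⟩⟩
  set m := (n + 2) / 4
  have hm : 1 ≤ m := by omega
  have hnm : n ≤ 4 * m + 1 := by omega
  have hn_sq : (n : ℝ) ^ 2 ≤ 25 * (m : ℝ) ^ 2 := by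
    exact_mod_cast (by nlinarith : n ^ 2 ≤ 25 * m ^ 2)
  have hcube : 4 * m + 1 ≤ (m + 1) ^ 3 := by
    have : m ≤ m ^ 2 := Nat.le_self_pow two_ne_zero m
    ring_nf
    omega
  have hlog : Real.log n ≤ 3 * harmonic m := log_le_three_mul_harmonic (hnm.trans hcube)
  have hlog₀ : 0 ≤ Real.log n := Real.log_nonneg (by exact_mod_cast (by omega : 1 ≤ n))
  calc 1 / 300 * (n : ℝ) ^ 2 * Real.log n
      ≤ 1 / 300 * (25 * (m : ℝ) ^ 2) * (3 * harmonic m) := by gcongr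
    _ = (m : ℝ) ^ 2 * harmonic m / 4 := by ring
    _ ≤ _ := sq_mul_harmonic_div_four_le_sum_sum_triEntry_sq (by omega)
end

section
/- For any directed path π as above, there exist constants c, C > 0 such that c n (log n)² ≤ 𝟙_π^T A_n Diag(𝟙_π) A_n 𝟙_π ≤ C n (log n)² for all n ≥ 2. -/
/-!
A path with unit vertical steps is 1-Lipschitz, so every pair of its vertices satisfies the cone
condition and `A[π_i, π_k] = 1 / |i - k|` off the diagonal. Since this kernel is symmetric, the
quadratic form is `∑_k R_k²` with the row sums `R_k = ∑_{i ≠ k} 1 / |i - k| = H_k + H_{n-1-k}`,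
and bounds on harmonic numbers give `log n ≤ R_k ≤ 5 log n` for `n ≥ 2`.
-/

open Finset

lemma abs_sub_le_of_abs_succ_sub_le_one {f : ℕ → ℤ} (hf : ∀ i, |f (i + 1) - f i| ≤ 1)
    {i k : ℕ} (hki : k ≤ i) : |f i - f k| ≤ (i : ℤ) - k := by
  induction i, hki using Nat.le_induction with
  | base => simp
  | succ i _ ih =>
    calc |f (i + 1) - f k| ≤ |f (i + 1) - f i| + |f i - f k| := abs_sub_le _ _ _
      _ ≤ 1 + ((i : ℤ) - k) := add_le_add (hf i) ih
      _ = ((i + 1 : ℕ) : ℤ) - k := by push_cast; ring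

lemma abs_sub_le_abs_sub_of_abs_succ_sub_le_one {f : ℕ → ℤ}
    (hf : ∀ i, |f (i + 1) - f i| ≤ 1) (i k : ℕ) : |f i - f k| ≤ |(i : ℤ) - k| := by
  rcases le_total k i with hki | hik
  · exact (abs_sub_le_of_abs_succ_sub_le_one hf hki).trans (le_abs_self _)
  · rw [abs_sub_comm, abs_sub_comm (i : ℤ)]
    exact (abs_sub_le_of_abs_succ_sub_le_one hf hik).trans (le_abs_self _)

lemma triEntry_of_abs_succ_sub_le_one {p : ℕ → ℤ} (hp : ∀ i, |p (i + 1) - p i| ≤ 1) (i k : ℕ) :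
    triEntry ((i : ℤ), p i) ((k : ℤ), p k) = |(i : ℝ) - k|⁻¹ := by
  by_cases hik : i = k
  · simp [triEntry, hik]
  · rw [triEntry, if_pos
      ⟨Nat.cast_injective.ne hik, abs_sub_le_abs_sub_of_abs_succ_sub_le_one hp i k⟩]
    push_cast
    rfl

lemma Finset.sum_sum_sum_mul_eq_sum_sq {ι R : Type*} [CommSemiring R] (s : Finset ι)
    {f : ι → ι → R} (hf : ∀ i j, f i j = f j i) :
    ∑ i ∈ s, ∑ j ∈ s, ∑ k ∈ s, f i k * f k j = ∑ k ∈ s, (∑ i ∈ s, f i k) ^ 2 := by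
  calc ∑ i ∈ s, ∑ j ∈ s, ∑ k ∈ s, f i k * f k j
      = ∑ k ∈ s, (∑ i ∈ s, f i k) * ∑ j ∈ s, f k j := by
        simp_rw [sum_mul_sum]
        exact (sum_congr rfl fun _ _ => sum_comm).trans sum_comm
    _ = ∑ k ∈ s, (∑ i ∈ s, f i k) ^ 2 :=
        sum_congr rfl fun k _ => by rw [sq, sum_congr rfl fun j _ => hf k j]

lemma sum_range_inv_abs_sub_eq_harmonic (a b : ℕ) :
    ∑ i ∈ range (a + b + 1), |(i : ℝ) - a|⁻¹ = harmonic a + harmonic b := by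
  induction b with
  | zero =>
    rw [add_zero, ← sum_range_reflect, sum_range_succ', harmonic_zero, Rat.cast_zero, add_zero,
      harmonic, Rat.cast_sum]
    simp only [add_tsub_cancel_right, tsub_zero, sub_self, abs_zero, inv_zero, add_zero,
      Nat.cast_add, Nat.cast_one, Rat.cast_inv, Rat.cast_add, Rat.cast_natCast, Rat.cast_one]
    refine sum_congr rfl fun x hx => ?_
    rw [Nat.cast_sub (mem_range.mp hx), Nat.cast_succ, sub_sub_cancel_left, abs_neg,
      abs_of_pos (by positivity)]
  | succ b ih =>
    rw [← add_assoc, sum_range_succ, ih, harmonic_succ]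
    push_cast
    rw [show (a : ℝ) + b + 1 - a = b + 1 by ring, abs_of_pos (by positivity)]
    ring

lemma log_le_harmonic_add_harmonic (a b : ℕ) :
    Real.log (a + b + 1 : ℕ) ≤ harmonic a + harmonic b := by
  calc Real.log (a + b + 1 : ℕ) ≤ Real.log (((a + 1 : ℕ) : ℝ) * (b + 1 : ℕ)) :=
        Real.log_le_log (by positivity) (by push_cast; nlinarith [a.cast_nonneg' (α := ℝ)])
    _ = Real.log (a + 1 : ℕ) + Real.log (b + 1 : ℕ) :=
        Real.log_mul (by positivity) (by positivity)
    _ ≤ harmonic a + harmonic b :=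
        add_le_add (log_add_one_le_harmonic a) (log_add_one_le_harmonic b)

lemma log_natCast_le_log_natCast {m n : ℕ} (h : m ≤ n) : Real.log m ≤ Real.log n := by
  rcases m.eq_zero_or_pos with rfl | hm
  · simpa using Real.log_natCast_nonneg n
  · exact Real.log_le_log (by exact_mod_cast hm) (by exact_mod_cast h)

lemma harmonic_add_harmonic_le (a b : ℕ) :
    (harmonic a + harmonic b : ℝ) ≤ 2 + 2 * Real.log (a + b + 1 : ℕ) := by
  have ha := log_natCast_le_log_natCast (show a ≤ a + b + 1 by omega)
  have hb := log_natCast_le_log_natCast (show b ≤ a + b + 1 by omega)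
  linarith [harmonic_le_one_add_log a, harmonic_le_one_add_log b]

lemma log_le_sum_range_inv_abs_sub {n k : ℕ} (hk : k < n) :
    Real.log n ≤ ∑ i ∈ range n, |(i : ℝ) - k|⁻¹ := by
  obtain ⟨b, rfl⟩ : ∃ b, n = k + b + 1 := ⟨n - k - 1, by omega⟩
  rw [sum_range_inv_abs_sub_eq_harmonic]
  exact log_le_harmonic_add_harmonic k b

lemma sum_range_inv_abs_sub_le {n k : ℕ} (hk : k < n) (hn : 2 ≤ n) :
    ∑ i ∈ range n, |(i : ℝ) - k|⁻¹ ≤ 5 * Real.log n := by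
  have hlog : 2 / 3 ≤ Real.log n := by
    have := Real.log_le_log two_pos (show (2 : ℝ) ≤ n by exact_mod_cast hn)
    linarith [Real.log_two_gt_d9]
  obtain ⟨b, rfl⟩ : ∃ b, n = k + b + 1 := ⟨n - k - 1, by omega⟩
  rw [sum_range_inv_abs_sub_eq_harmonic]
  linarith [harmonic_add_harmonic_le k b]

/-- For any directed path `π_i = (i, p i)` with `p 0 = 0` and unit vertical
steps, there are constants `c, C > 0` such that for all `n ≥ 2`,
`c n (log n)² ≤ 𝟙_π^T A_n Diag(𝟙_π) A_n 𝟙_π ≤ C n (log n)²`, where the middle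
factor restricts the intermediate vertex to lie on the path. -/
theorem path_diag_quadratic_form_asymp :
    ∃ c C : ℝ, 0 < c ∧ 0 < C ∧ ∀ n : ℕ, 2 ≤ n → ∀ p : ℕ → ℤ, p 0 = 0 →
      (∀ i : ℕ, |p (i + 1) - p i| = 1) →
      c * n * (Real.log n) ^ 2 ≤
        (∑ i ∈ Finset.range n, ∑ j ∈ Finset.range n, ∑ k ∈ Finset.range n,
          triEntry ((i : ℤ), p i) ((k : ℤ), p k) *
            triEntry ((k : ℤ), p k) ((j : ℤ), p j)) ∧
      (∑ i ∈ Finset.range n, ∑ j ∈ Finset.range n, ∑ k ∈ Finset.range n,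
          triEntry ((i : ℤ), p i) ((k : ℤ), p k) *
            triEntry ((k : ℤ), p k) ((j : ℤ), p j)) ≤
        C * n * (Real.log n) ^ 2 := by
  refine ⟨1, 25, one_pos, by norm_num, fun n hn p _ hp => ?_⟩
  simp only [triEntry_of_abs_succ_sub_le_one fun i => (hp i).le]
  rw [sum_sum_sum_mul_eq_sum_sq _ fun i j => by rw [abs_sub_comm]]
  have hlog : 0 ≤ Real.log n := Real.log_natCast_nonneg n
  constructor
  · have := card_nsmul_le_sum (range n) (fun k => (∑ i ∈ range n, |(i : ℝ) - k|⁻¹) ^ 2)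
      (Real.log n ^ 2) fun k hk =>
        pow_le_pow_left₀ hlog (log_le_sum_range_inv_abs_sub (mem_range.mp hk)) 2
    simp only [card_range, nsmul_eq_mul] at this
    linarith
  · have := sum_le_card_nsmul (range n) (fun k => (∑ i ∈ range n, |(i : ℝ) - k|⁻¹) ^ 2)
      ((5 * Real.log n) ^ 2) fun k hk =>
        pow_le_pow_left₀ (by positivity) (sum_range_inv_abs_sub_le (mem_range.mp hk) hn) 2
    simp only [card_range, nsmul_eq_mul] at this
    linarith
end
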